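/- arXiv:1502.04843 — 4 statements merged into one kernel-verified Lean document; each statement's English description precedes it below -/
import Mathlib

section
/- For every time series x ∈ ℝ^k with 1 ≤ k ≤ n and every elasticity m ≥ 1, the elastic inner product W ↦ σ_W(x) is a convex function on ℝ^{n×m}; consequently, for fixed x the elastic linear function (W, b) ↦ b + σ_W(x) is convex on ℝ^{n×m} × ℝ. -/
/-! For each warping path `φ`, `W ↦ ⟨x ⊗_φ 0, W⟩` is linear, and these functionals are bounded
above at every `W` (by `∑ |x_i| |w_ij|`). Since `P(k,m)` is nonempty (the path down the first
column and along the last row), `σ_W(x)` is a pointwise supremum of linear functionals, hence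
convex; composing with `(W, b) ↦ W` and adding the linear map `(W, b) ↦ b` keeps convexity. -/

/-- A warping path in the grid `[k] × [m]` (1-based points): starts at `(1,1)`,
ends at `(k,m)`, stays inside the grid, and each step is `(1,0)`, `(0,1)` or `(1,1)`. -/
def IsWarpingPath (k m : ℕ) (φ : List (ℕ × ℕ)) : Prop :=
  φ.head? = some (1, 1) ∧ φ.getLast? = some (k, m) ∧
  (∀ t ∈ φ, 1 ≤ t.1 ∧ t.1 ≤ k ∧ 1 ≤ t.2 ∧ t.2 ≤ m) ∧
  ∀ (l : ℕ) (h : l + 1 < φ.length),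
    ((φ[l + 1]'h).1 = (φ[l]'(Nat.lt_of_succ_lt h)).1 + 1 ∧
       (φ[l + 1]'h).2 = (φ[l]'(Nat.lt_of_succ_lt h)).2) ∨
    ((φ[l + 1]'h).1 = (φ[l]'(Nat.lt_of_succ_lt h)).1 ∧
       (φ[l + 1]'h).2 = (φ[l]'(Nat.lt_of_succ_lt h)).2 + 1) ∨
    ((φ[l + 1]'h).1 = (φ[l]'(Nat.lt_of_succ_lt h)).1 + 1 ∧
       (φ[l + 1]'h).2 = (φ[l]'(Nat.lt_of_succ_lt h)).2 + 1)

/-- `P(k,m)`: the set of all warping paths in the grid `[k] × [m]`. -/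
def WarpingPaths (k m : ℕ) : Set (List (ℕ × ℕ)) := {φ | IsWarpingPath k m φ}

/-- Value of a time series at a (0-based) natural index, `0` out of bounds. -/
def nth {k : ℕ} (x : Fin k → ℝ) (i : ℕ) : ℝ := if h : i < k then x ⟨i, h⟩ else 0

/-- Entry of a matrix at (0-based) natural indices, `0` out of bounds. -/
def entry {n m : ℕ} (W : Fin n → Fin m → ℝ) (i j : ℕ) : ℝ :=
  if h : i < n ∧ j < m then W ⟨i, h.1⟩ ⟨j, h.2⟩ else 0

/-- Elastic embedding `x ⊗_φ Z` of a time series `x ∈ ℝ^k` (`k ≤ n`) into the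
matrix `Z ∈ ℝ^{n×m}` along the warping path `φ` (points of `φ` are 1-based). -/
def embed {n m k : ℕ} (x : Fin k → ℝ) (φ : List (ℕ × ℕ)) (Z : Fin n → Fin m → ℝ) :
    Fin n → Fin m → ℝ :=
  fun i j => if ((i : ℕ) + 1, (j : ℕ) + 1) ∈ φ then nth x i else Z i j

/-- Frobenius inner product on `ℝ^{n×m}`. -/
def frobInner {n m : ℕ} (X Y : Fin n → Fin m → ℝ) : ℝ := ∑ i, ∑ j, X i j * Y i j

/-- Frobenius norm on `ℝ^{n×m}`. -/
noncomputable def frobNorm {n m : ℕ} (X : Fin n → Fin m → ℝ) : ℝ :=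
  Real.sqrt (frobInner X X)

/-- Elastic inner product `σ_W(x) = max_{φ ∈ P(k,m)} ⟨x ⊗_φ 0, W⟩`. -/
noncomputable def elasticIP {n m k : ℕ} (W : Fin n → Fin m → ℝ) (x : Fin k → ℝ) : ℝ :=
  sSup ((fun φ => frobInner (embed x φ (0 : Fin n → Fin m → ℝ)) W) '' WarpingPaths k m)

/-- Elastic Euclidean distance `δ_Y(x) = min_{φ ∈ P(k,m)} ‖x ⊗_φ Y − Y‖`. -/
noncomputable def elasticDist {n m k : ℕ} (Y : Fin n → Fin m → ℝ) (x : Fin k → ℝ) : ℝ :=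
  sInf ((fun φ => frobNorm (embed x φ Y - Y)) '' WarpingPaths k m)

/-- DTW distance `d(x,z) = min_{φ ∈ P(k,m)} sqrt(Σ_{(i,j) ∈ φ} (x_i − z_j)²)`. -/
noncomputable def dtw {k m : ℕ} (x : Fin k → ℝ) (z : Fin m → ℝ) : ℝ :=
  sInf ((fun φ : List (ℕ × ℕ) =>
      Real.sqrt (∑ t ∈ φ.toFinset, (nth x (t.1 - 1) - nth z (t.2 - 1)) ^ 2)) ''
    WarpingPaths k m)

def cornerPath (k m : ℕ) : List (ℕ × ℕ) :=
  (List.range (k + m - 1)).map fun l => if l < k then (l + 1, 1) else (k, l + 2 - k)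

lemma cornerPath_getElem (k m l : ℕ) (h : l < (cornerPath k m).length) :
    (cornerPath k m)[l] = if l < k then (l + 1, 1) else (k, l + 2 - k) := by
  simp [cornerPath]

lemma isWarpingPath_cornerPath {k m : ℕ} (hk : 1 ≤ k) (hm : 1 ≤ m) :
    IsWarpingPath k m (cornerPath k m) := by
  have hlen : (cornerPath k m).length = k + m - 1 := by simp [cornerPath]
  refine ⟨?head, ?last, ?inside, ?steps⟩
  case head =>
    rw [List.head?_eq_getElem?, List.getElem?_eq_getElem (by omega), cornerPath_getElem,
      if_pos (by omega)]
  case last =>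
    rw [List.getLast?_eq_getElem?, List.getElem?_eq_getElem (by omega), cornerPath_getElem,
      hlen]
    split_ifs <;> simp only [Option.some.injEq, Prod.mk.injEq, true_and] <;> omega
  case inside =>
    simp only [cornerPath, List.mem_map, List.mem_range]
    rintro _ ⟨l, hl, rfl⟩
    split_ifs <;> simp <;> omega
  case steps =>
    intro l h
    rw [cornerPath_getElem, cornerPath_getElem]
    split_ifs <;> simp <;> omega

lemma warpingPaths_nonempty {k m : ℕ} (hk : 1 ≤ k) (hm : 1 ≤ m) :
    (WarpingPaths k m).Nonempty :=
  ⟨cornerPath k m, isWarpingPath_cornerPath hk hm⟩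

theorem convexOn_csSup_image {ι E : Type*} [AddCommGroup E] [Module ℝ E] {s : Set E}
    {S : Set ι} {f : ι → E → ℝ} (hs : Convex ℝ s) (hS : S.Nonempty)
    (hf : ∀ i ∈ S, ConvexOn ℝ s (f i)) (hbdd : ∀ w ∈ s, BddAbove ((fun i => f i w) '' S)) :
    ConvexOn ℝ s fun w => sSup ((fun i => f i w) '' S) := by
  refine ⟨hs, fun v hv w hw a b ha hb hab => csSup_le (hS.image _) ?_⟩
  rintro _ ⟨i, hi, rfl⟩
  calc f i (a • v + b • w) ≤ a • f i v + b • f i w := (hf i hi).2 hv hw ha hb hab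
    _ ≤ a • sSup ((fun i => f i v) '' S) + b • sSup ((fun i => f i w) '' S) := by
      gcongr
      · exact le_csSup (hbdd v hv) ⟨i, hi, rfl⟩
      · exact le_csSup (hbdd w hw) ⟨i, hi, rfl⟩

def frobInnerLeft {n m : ℕ} (X : Fin n → Fin m → ℝ) : (Fin n → Fin m → ℝ) →ₗ[ℝ] ℝ where
  toFun := frobInner X
  map_add' W V := by simp only [frobInner, Pi.add_apply, mul_add, Finset.sum_add_distrib]
  map_smul' c W := by
    simp only [frobInner, Pi.smul_apply, smul_eq_mul, RingHom.id_apply, Finset.mul_sum,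
      mul_left_comm]

lemma abs_embed_zero_le {n m k : ℕ} (x : Fin k → ℝ) (φ : List (ℕ × ℕ)) (i : Fin n)
    (j : Fin m) : |embed x φ 0 i j| ≤ |nth x i| := by
  unfold embed
  split_ifs <;> simp

lemma bddAbove_frobInner_embed {n m k : ℕ} (x : Fin k → ℝ) (S : Set (List (ℕ × ℕ)))
    (W : Fin n → Fin m → ℝ) : BddAbove ((fun φ => frobInner (embed x φ 0) W) '' S) := by
  refine ⟨∑ i : Fin n, ∑ j, |nth x i| * |W i j|, ?_⟩
  rintro _ ⟨φ, -, rfl⟩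
  refine Finset.sum_le_sum fun i _ => Finset.sum_le_sum fun j _ => ?_
  calc embed x φ 0 i j * W i j ≤ |embed x φ 0 i j| * |W i j| :=
        (le_abs_self _).trans_eq (abs_mul _ _)
    _ ≤ |nth x i| * |W i j| :=
        mul_le_mul_of_nonneg_right (abs_embed_zero_le x φ i j) (abs_nonneg _)

theorem convexOn_elasticIP {n m k : ℕ} (hk : 1 ≤ k) (hm : 1 ≤ m) (x : Fin k → ℝ) :
    ConvexOn ℝ Set.univ fun W : Fin n → Fin m → ℝ => elasticIP W x :=
  convexOn_csSup_image convex_univ (warpingPaths_nonempty hk hm)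
    (fun φ _ => (frobInnerLeft (embed x φ 0)).convexOn convex_univ)
    (fun W _ => bddAbove_frobInner_embed x _ W)

theorem elasticIP_convex_general (n m k : ℕ) (hk1 : 1 ≤ k) (hm : 1 ≤ m)
    (x : Fin k → ℝ) :
    ConvexOn ℝ Set.univ (fun W : Fin n → Fin m → ℝ => elasticIP W x) ∧
    ConvexOn ℝ Set.univ
      (fun p : (Fin n → Fin m → ℝ) × ℝ => p.2 + elasticIP p.1 x) := by
  have hσ := convexOn_elasticIP (n := n) hk1 hm x
  refine ⟨hσ, ?_⟩
  have hbias := (LinearMap.snd ℝ (Fin n → Fin m → ℝ) ℝ).convexOn convex_univ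
  exact hbias.add (hσ.comp_linearMap (LinearMap.fst ℝ _ ℝ))

/-- For every time series `x ∈ ℝ^k` with `1 ≤ k ≤ n` and every elasticity
`m ≥ 1`, the elastic inner product `W ↦ σ_W(x)` is convex on `ℝ^{n×m}`, and consequently
the elastic linear function `(W, b) ↦ b + σ_W(x)` is convex on `ℝ^{n×m} × ℝ`. -/
theorem elasticIP_convex (n m k : ℕ) (hk1 : 1 ≤ k) (hkn : k ≤ n) (hm : 1 ≤ m)
    (x : Fin k → ℝ) :
    ConvexOn ℝ Set.univ (fun W : Fin n → Fin m → ℝ => elasticIP W x) ∧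
    ConvexOn ℝ Set.univ
      (fun p : (Fin n → Fin m → ℝ) × ℝ => p.2 + elasticIP p.1 x) :=
  elasticIP_convex_general n m k hk1 hm x
end

section
/- Let z ∈ ℝ^m and let Z ∈ ℝ^{n×m} be the matrix all of whose n rows equal z. Then for every time series x ∈ ℝ^k with 1 ≤ k ≤ n, the elastic Euclidean distance equals the DTW distance: δ_Z(x) = d(x, z). In particular, the elastic Euclidean distance with a constant-row parameter matrix generalizes the dynamic time warping distance. -/
/-!
For a constant-row matrix `Z`, the residual `x ⊗_φ Z - Z` vanishes off `φ` and equals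
`x_i - z_j` at `(i, j) ∈ φ`, so `‖x ⊗_φ Z - Z‖²` is exactly the DTW cost of `φ`. The two
minima are thus taken over the same function on the same set of warping paths.
-/

theorem nth_coe {k : ℕ} (x : Fin k → ℝ) (i : Fin k) : nth x i = x i := by
  simp [nth]

theorem embed_sub_self_apply {n m k : ℕ} (x : Fin k → ℝ) (φ : List (ℕ × ℕ))
    (Y : Fin n → Fin m → ℝ) (i : Fin n) (j : Fin m) :
    (embed x φ Y - Y) i j = if ((i : ℕ) + 1, (j : ℕ) + 1) ∈ φ then nth x i - Y i j else 0 := by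
  simp only [Pi.sub_apply, embed]
  split_ifs <;> ring

theorem frobInner_self_eq_sum_sq {n m : ℕ} (X : Fin n → Fin m → ℝ) :
    frobInner X X = ∑ p : Fin n × Fin m, X p.1 p.2 ^ 2 := by
  simp only [frobInner, sq, Fintype.sum_prod_type]

theorem IsWarpingPath.mem_bounds {k m n : ℕ} {φ : List (ℕ × ℕ)} (hφ : IsWarpingPath k m φ)
    (hkn : k ≤ n) {t : ℕ × ℕ} (ht : t ∈ φ) : 1 ≤ t.1 ∧ t.1 ≤ n ∧ 1 ≤ t.2 ∧ t.2 ≤ m := by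
  obtain ⟨h₁, h₂, h₃, h₄⟩ := hφ.2.2.1 t ht
  omega

def gridShift (n m : ℕ) : Fin n × Fin m ↪ ℕ × ℕ where
  toFun p := ((p.1 : ℕ) + 1, (p.2 : ℕ) + 1)
  inj' p q h := by
    simp only [Prod.mk.injEq, add_left_inj] at h
    exact Prod.ext (Fin.ext h.1) (Fin.ext h.2)

theorem gridShift_apply {n m : ℕ} (p : Fin n × Fin m) :
    gridShift n m p = ((p.1 : ℕ) + 1, (p.2 : ℕ) + 1) :=
  rfl

theorem sum_ite_mem_gridShift {n m : ℕ} (φ : List (ℕ × ℕ))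
    (hφ : ∀ t ∈ φ, 1 ≤ t.1 ∧ t.1 ≤ n ∧ 1 ≤ t.2 ∧ t.2 ≤ m) (f : ℕ × ℕ → ℝ) :
    ∑ p : Fin n × Fin m, (if gridShift n m p ∈ φ then f (gridShift n m p) else 0) =
      ∑ t ∈ φ.toFinset, f t := by
  rw [← Finset.sum_filter, ← Finset.sum_map]
  congr 1
  ext t
  simp only [Finset.mem_map, Finset.mem_filter, Finset.mem_univ, true_and, List.mem_toFinset]
  constructor
  · rintro ⟨p, hp, rfl⟩
    exact hp
  · intro ht
    obtain ⟨h₁, h₂, h₃, h₄⟩ := hφ t ht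
    have hshift : gridShift n m (⟨t.1 - 1, by omega⟩, ⟨t.2 - 1, by omega⟩) = t :=
      Prod.ext (Nat.sub_add_cancel h₁) (Nat.sub_add_cancel h₃)
    exact ⟨_, hshift.symm ▸ ht, hshift⟩

theorem elasticDist_constRows_eq_dtw_general (n m k : ℕ) (hkn : k ≤ n)
    (z : Fin m → ℝ) (x : Fin k → ℝ) :
    elasticDist (fun _ : Fin n => z) x = dtw x z := by
  refine congrArg sInf (Set.image_congr fun φ hφ => congrArg Real.sqrt ?_)
  rw [frobInner_self_eq_sum_sq, ← sum_ite_mem_gridShift φ fun t => hφ.mem_bounds hkn]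
  refine Finset.sum_congr rfl fun p _ => ?_
  simp only [embed_sub_self_apply, gridShift_apply, Nat.add_sub_cancel, nth_coe]
  split_ifs <;> ring

/-- If `Z ∈ ℝ^{n×m}` has all `n` rows equal to `z ∈ ℝ^m`, then for every
time series `x ∈ ℝ^k` with `1 ≤ k ≤ n` the elastic Euclidean distance equals the DTW
distance: `δ_Z(x) = d(x, z)`. -/
theorem elasticDist_constRows_eq_dtw (n m k : ℕ) (hk1 : 1 ≤ k) (hkn : k ≤ n) (hm : 1 ≤ m)
    (z : Fin m → ℝ) (x : Fin k → ℝ) :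
    elasticDist (fun _ : Fin n => z) x = dtw x z :=
  elasticDist_constRows_eq_dtw_general n m k hkn z x
end

section
/- Correctness of the dynamic program for the elastic inner product (Algorithm 1): Let x ∈ ℝ^k and W ∈ ℝ^{n×m} with 1 ≤ k ≤ n and m ≥ 1, and define the score matrix S = (s_{ij}) ∈ ℝ^{k×m} by s_{11} = x_1·w_{11}; s_{i1} = s_{i−1,1} + x_i·w_{i1} for 2 ≤ i ≤ k; s_{1j} = s_{1,j−1} + x_1·w_{1j} for 2 ≤ j ≤ m; and s_{ij} = x_i·w_{ij} + max{s_{i−1,j}, s_{i,j−1}, s_{i−1,j−1}} for 2 ≤ i ≤ k and 2 ≤ j ≤ m. Then s_{km} = σ_W(x) = max_{φ ∈ P(k,m)} Σ_{(i,j)∈φ} x_i·w_{ij}. -/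
/-! A warping path to a cell `(c+1, d+1) ≠ (1, 1)` is a warping path to one of the predecessor
cells `(c, d+1)`, `(c+1, d)`, `(c, d)` extended by that cell, which it cannot already visit since
paths are monotone. So the scores of the paths to a cell are the scores of the paths to its
predecessors, shifted by the cell's weight. As `· + w` is monotone and the greatest element of a
union is the max of the greatest elements, induction over the grid shows that `S i j` is the
greatest score of a path to `(i+1, j+1)`. -/

open Set

def WarpStep (p q : ℕ × ℕ) : Prop :=
  (q.1 = p.1 + 1 ∧ q.2 = p.2) ∨ (q.1 = p.1 ∧ q.2 = p.2 + 1) ∨ (q.1 = p.1 + 1 ∧ q.2 = p.2 + 1)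

lemma WarpStep.le {p q : ℕ × ℕ} (h : WarpStep p q) : p ≤ q := by
  rw [Prod.le_def]
  unfold WarpStep at h
  omega

lemma isWarpingPath_iff {a b : ℕ} {φ : List (ℕ × ℕ)} :
    IsWarpingPath a b φ ↔ φ.head? = some (1, 1) ∧ φ.getLast? = some (a, b) ∧
      (∀ t ∈ φ, (1, 1) ≤ t ∧ t ≤ (a, b)) ∧ φ.IsChain WarpStep := by
  simp only [IsWarpingPath, List.isChain_iff_getElem, WarpStep, Prod.le_def,
    and_and_and_comm (a := 1 ≤ _), and_assoc]

lemma IsWarpingPath.one_le {a b : ℕ} {φ : List (ℕ × ℕ)} (h : IsWarpingPath a b φ) :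
    1 ≤ a ∧ 1 ≤ b := by
  obtain ⟨hhead, -, hbounds, -⟩ := isWarpingPath_iff.1 h
  have := hbounds _ (List.mem_of_mem_head? hhead)
  simp only [Prod.mk_le_mk] at this
  omega

lemma warpingPaths_zero_left (b : ℕ) : WarpingPaths 0 b = ∅ :=
  eq_empty_of_forall_notMem fun _ h => by simpa using h.one_le

lemma warpingPaths_zero_right (a : ℕ) : WarpingPaths a 0 = ∅ :=
  eq_empty_of_forall_notMem fun _ h => by simpa using h.one_le

lemma warpingPaths_one_one : WarpingPaths 1 1 = {[(1, 1)]} := by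
  ext φ
  simp only [WarpingPaths, mem_ofPred_eq, mem_singleton_iff, isWarpingPath_iff]
  constructor
  · rintro ⟨hhead, -, hbounds, hchain⟩
    match φ, hhead, hchain with
    | [_], rfl, _ => rfl
    | t :: u :: _, rfl, hchain =>
      have ht := (hbounds t (by simp)).1
      have hu := (hbounds u (by simp)).2
      have := (List.isChain_cons_cons.1 hchain).1
      simp only [WarpStep, Prod.le_def] at ht hu this
      omega
  · rintro rfl
    simp

lemma List.IsChain.le_of_getLast? {α : Type*} [Preorder α] {R : α → α → Prop}
    (hR : ∀ ⦃x y⦄, R x y → x ≤ y) {l : List α} {p : α} (h : l.IsChain R)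
    (hp : l.getLast? = some p) : ∀ t ∈ l, t ≤ p := by
  obtain ⟨l, rfl⟩ := List.getLast?_eq_some_iff.1 hp
  intro t ht
  rcases List.mem_append.1 ht with ht | ht
  · exact h.backwards_concat_induction (· ≤ p) l (fun _ _ hxy hy => (hR hxy).trans hy) le_rfl t ht
  · exact (List.mem_singleton.1 ht).le

lemma isWarpingPath_append_singleton {ψ : List (ℕ × ℕ)} {p : ℕ × ℕ} {c d : ℕ}
    (hp : ψ.getLast? = some p) :
    IsWarpingPath c d (ψ ++ [(c, d)]) ↔ IsWarpingPath p.1 p.2 ψ ∧ WarpStep p (c, d) := by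
  have hne : ψ ≠ [] := by rintro rfl; simp at hp
  have hp_mem : p ∈ ψ := List.mem_of_getLast? hp
  simp only [isWarpingPath_iff, List.head?_append_of_ne_nil _ hne, List.getLast?_concat,
    List.isChain_append, hp, List.mem_append, List.mem_singleton, Option.mem_def,
    List.head?_cons, Option.some.injEq, forall_eq', List.isChain_singleton, Prod.mk.eta]
  constructor
  · rintro ⟨hhead, -, hbounds, hchain, -, hstep⟩
    refine ⟨⟨hhead, trivial, fun t ht => ⟨(hbounds t (.inl ht)).1, ?_⟩, hchain⟩, hstep⟩
    exact hchain.le_of_getLast? (fun _ _ => WarpStep.le) hp t ht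
  · rintro ⟨⟨hhead, -, hbounds, hchain⟩, hstep⟩
    refine ⟨hhead, trivial, ?_, hchain, trivial, hstep⟩
    rintro t (ht | rfl)
    · exact ⟨(hbounds t ht).1, (hbounds t ht).2.trans hstep.le⟩
    · exact ⟨(hbounds p hp_mem).1.trans hstep.le, le_rfl⟩

lemma warpingPaths_succ_succ {c d : ℕ} (hcd : c ≠ 0 ∨ d ≠ 0) :
    WarpingPaths (c + 1) (d + 1) = (· ++ [(c + 1, d + 1)]) ''
      (WarpingPaths c (d + 1) ∪ WarpingPaths (c + 1) d ∪ WarpingPaths c d) := by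
  ext φ
  constructor
  · intro hφ
    obtain ⟨hhead, hlast, -⟩ := isWarpingPath_iff.1 hφ
    obtain ⟨ψ, rfl⟩ := List.getLast?_eq_some_iff.1 hlast
    obtain ⟨p, hp⟩ : ∃ p, ψ.getLast? = some p := by
      rcases ψ.eq_nil_or_concat with rfl | ⟨ψ', p, rfl⟩
      · simp at hhead
        omega
      · exact ⟨p, by simp⟩
    obtain ⟨hψ, hstep⟩ := (isWarpingPath_append_singleton hp).1 hφ
    refine ⟨ψ, ?_, rfl⟩
    obtain ⟨a, b⟩ := p
    simp only [WarpStep, Nat.add_right_cancel_iff] at hstep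
    rcases hstep with ⟨rfl, rfl⟩ | ⟨rfl, rfl⟩ | ⟨rfl, rfl⟩
    exacts [.inl (.inl hψ), .inl (.inr hψ), .inr hψ]
  · rintro ⟨ψ, (hψ | hψ) | hψ, rfl⟩ <;>
      exact (isWarpingPath_append_singleton hψ.2.1).2 ⟨hψ, by simp [WarpStep]⟩

section Score

variable {R : Type*} [AddCommMonoid R]

/-- The weights `w` are indexed from `0`, like the score matrix, the points of a path from `1`. -/
def pathScore (w : ℕ → ℕ → R) (φ : List (ℕ × ℕ)) : R := ∑ t ∈ φ.toFinset, w (t.1 - 1) (t.2 - 1)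

lemma pathScore_append_singleton (w : ℕ → ℕ → R) {ψ : List (ℕ × ℕ)} {q : ℕ × ℕ} (hq : q ∉ ψ) :
    pathScore w (ψ ++ [q]) = pathScore w ψ + w (q.1 - 1) (q.2 - 1) := by
  rw [pathScore, List.toFinset_append, Finset.sum_union (by simpa using hq)]
  simp [pathScore]

lemma image_pathScore_warpingPaths_succ_succ (w : ℕ → ℕ → R) {c d : ℕ} (hcd : c ≠ 0 ∨ d ≠ 0) :
    pathScore w '' WarpingPaths (c + 1) (d + 1) = (· + w c d) ''
      (pathScore w '' WarpingPaths c (d + 1) ∪ pathScore w '' WarpingPaths (c + 1) d ∪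
        pathScore w '' WarpingPaths c d) := by
  rw [← image_union, ← image_union, warpingPaths_succ_succ hcd, image_image, image_image]
  refine image_congr fun ψ hψ => pathScore_append_singleton w fun hmem => ?_
  rcases hψ with (hψ | hψ) | hψ <;>
    simpa [Prod.le_def] using ((isWarpingPath_iff.1 hψ).2.2.1 _ hmem).2

variable [LinearOrder R]

/-- Algorithm 1 with indices from `0`: `S i j` is the paper's `s_{i+1,j+1}`. -/
structure IsScoreMatrix (w : ℕ → ℕ → R) (k m : ℕ) (S : ℕ → ℕ → R) : Prop where
  zero_zero : S 0 0 = w 0 0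
  succ_zero : ∀ i, i + 1 < k → S (i + 1) 0 = S i 0 + w (i + 1) 0
  zero_succ : ∀ j, j + 1 < m → S 0 (j + 1) = S 0 j + w 0 (j + 1)
  succ_succ : ∀ i j, i + 1 < k → j + 1 < m →
    S (i + 1) (j + 1) = w (i + 1) (j + 1) + max (max (S i (j + 1)) (S (i + 1) j)) (S i j)

theorem IsScoreMatrix.isGreatest [IsOrderedAddMonoid R] {w : ℕ → ℕ → R} {k m : ℕ}
    {S : ℕ → ℕ → R} (hS : IsScoreMatrix w k m S) {i j : ℕ} (hi : i < k) (hj : j < m) :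
    IsGreatest (pathScore w '' WarpingPaths (i + 1) (j + 1)) (S i j) := by
  induction i generalizing j with
  | zero =>
    induction j with
    | zero => simp [warpingPaths_one_one, pathScore, hS.zero_zero]
    | succ j ih =>
      rw [image_pathScore_warpingPaths_succ_succ w (.inr j.succ_ne_zero), hS.zero_succ j hj]
      simp only [warpingPaths_zero_left, image_empty, empty_union, union_empty]
      exact add_left_mono.map_isGreatest (ih (by omega))
  | succ i ihi =>
    induction j with
    | zero =>
      rw [image_pathScore_warpingPaths_succ_succ w (.inl i.succ_ne_zero), hS.succ_zero i hi]
      simp only [warpingPaths_zero_right, image_empty, union_empty]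
      exact add_left_mono.map_isGreatest (ihi (by omega) hj)
    | succ j ihj =>
      rw [image_pathScore_warpingPaths_succ_succ w (.inl i.succ_ne_zero), hS.succ_succ i j hi hj,
        add_comm (w _ _)]
      exact add_left_mono.map_isGreatest
        (((ihi (by omega) hj).union (ihj (by omega))).union (ihi (j := j) (by omega) (by omega)))

end Score

theorem dp_elasticIP_correct_general (n m k : ℕ) (hk1 : 1 ≤ k) (hm : 1 ≤ m)
    (x : Fin k → ℝ) (W : Fin n → Fin m → ℝ) (S : ℕ → ℕ → ℝ)
    (h00 : S 0 0 = nth x 0 * entry W 0 0)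
    (hi0 : ∀ i : ℕ, i + 1 < k → S (i + 1) 0 = S i 0 + nth x (i + 1) * entry W (i + 1) 0)
    (h0j : ∀ j : ℕ, j + 1 < m → S 0 (j + 1) = S 0 j + nth x 0 * entry W 0 (j + 1))
    (hij : ∀ i j : ℕ, i + 1 < k → j + 1 < m →
      S (i + 1) (j + 1) = nth x (i + 1) * entry W (i + 1) (j + 1) +
        max (max (S i (j + 1)) (S (i + 1) j)) (S i j)) :
    S (k - 1) (m - 1) =
      sSup ((fun φ : List (ℕ × ℕ) =>
          ∑ t ∈ φ.toFinset, nth x (t.1 - 1) * entry W (t.1 - 1) (t.2 - 1)) ''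
        WarpingPaths k m) := by
  have hS : IsScoreMatrix (fun i j => nth x i * entry W i j) k m S := ⟨h00, hi0, h0j, hij⟩
  obtain ⟨k, rfl⟩ := Nat.exists_eq_add_of_le' hk1
  obtain ⟨m, rfl⟩ := Nat.exists_eq_add_of_le' hm
  exact (hS.isGreatest k.lt_add_one m.lt_add_one).csSup_eq.symm

/-- Correctness of the dynamic program for the elastic inner product
(Algorithm 1). The score matrix `S` is indexed 0-based, so `S i j` is the paper's
`s_{i+1,j+1}` and the returned value is `S (k-1) (m-1) = s_{km}`. -/
theorem dp_elasticIP_correct (n m k : ℕ) (hk1 : 1 ≤ k) (hkn : k ≤ n) (hm : 1 ≤ m)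
    (x : Fin k → ℝ) (W : Fin n → Fin m → ℝ) (S : ℕ → ℕ → ℝ)
    (h00 : S 0 0 = nth x 0 * entry W 0 0)
    (hi0 : ∀ i : ℕ, i + 1 < k → S (i + 1) 0 = S i 0 + nth x (i + 1) * entry W (i + 1) 0)
    (h0j : ∀ j : ℕ, j + 1 < m → S 0 (j + 1) = S 0 j + nth x 0 * entry W 0 (j + 1))
    (hij : ∀ i j : ℕ, i + 1 < k → j + 1 < m →
      S (i + 1) (j + 1) = nth x (i + 1) * entry W (i + 1) (j + 1) +
        max (max (S i (j + 1)) (S (i + 1) j)) (S i j)) :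
    S (k - 1) (m - 1) =
      sSup ((fun φ : List (ℕ × ℕ) =>
          ∑ t ∈ φ.toFinset, nth x (t.1 - 1) * entry W (t.1 - 1) (t.2 - 1)) ''
        WarpingPaths k m) :=
  dp_elasticIP_correct_general n m k hk1 hm x W S h00 hi0 h0j hij
end

section
/- Every piecewise smooth function f : ℝ^d → ℝ is differentiable at Lebesgue-almost every point: the set of points at which f fails to be differentiable has d-dimensional Lebesgue measure zero. -/
/-!
Near any point, finitely many `C¹` functions are simultaneously Lipschitz on a small ball. On
a segment through that ball, continuity of `f` and finiteness of the family force `f` to agree,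
at every point, with one fixed `fᵢ` frequently to the right of it; so the right Dini derivative
of `f` along the segment is bounded by the common Lipschitz constant, and `f` is Lipschitz on the
ball. Hence `f` is locally Lipschitz and Rademacher's theorem applies.
-/

/-- A function `f : E → ℝ` is piecewise smooth if it is continuous and there is a finite
collection of continuously differentiable functions `f_i : E → ℝ` such that
`f x ∈ {f_i x : i ∈ I}` for every `x`. -/
def PiecewiseSmooth {E : Type} [NormedAddCommGroup E] [NormedSpace ℝ E]
    (f : E → ℝ) : Prop :=
  Continuous f ∧
    ∃ (ι : Type) (_ : Fintype ι) (g : ι → E → ℝ),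
      (∀ i, ContDiff ℝ 1 (g i)) ∧ ∀ x, ∃ i, f x = g i x

open MeasureTheory Set Metric Filter Topology
open scoped NNReal

theorem exists_eq_and_frequently_eq_of_eventually_exists_eq {α β ι : Type*}
    [TopologicalSpace β] [T2Space β] [Finite ι] {l : Filter α} [l.NeBot] {h : α → β}
    {G : ι → α → β} {x : α} (hh : Tendsto h l (𝓝 (h x)))
    (hG : ∀ i, Tendsto (G i) l (𝓝 (G i x))) (hsel : ∀ᶠ t in l, ∃ i, h t = G i t) :
    ∃ i, h x = G i x ∧ ∃ᶠ t in l, h t = G i t := by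
  obtain ⟨i, hi⟩ := frequently_exists.1 hsel.frequently
  exact ⟨i, tendsto_nhds_unique_of_frequently_eq hh (hG i) hi, hi⟩

theorem le_add_mul_sub_of_forall_exists_eq {ι : Type*} [Finite ι] {h : ℝ → ℝ}
    {G : ι → ℝ → ℝ} {L : ℝ≥0} {a b : ℝ} (hh : ContinuousOn h (Icc a b))
    (hG : ∀ i, LipschitzOnWith L (G i) (Icc a b)) (hsel : ∀ t ∈ Icc a b, ∃ i, h t = G i t) :
    ∀ t ∈ Icc a b, h t ≤ h a + L * (t - a) := by
  refine image_le_of_liminf_slope_right_le_deriv_boundary hh (B' := fun _ => L)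
    (by simp) (by fun_prop)
    (fun x _ => ((((hasDerivAt_id x).sub_const a).const_mul (L : ℝ)).const_add
      (h a)).hasDerivWithinAt.congr_deriv (by simp)) ?_
  intro x hx r hr
  have hIoo : Ioo x b ∈ 𝓝[>] x := Ioo_mem_nhdsGT hx.2
  have hle : 𝓝[>] x ≤ 𝓝[Icc a b] x :=
    nhdsWithin_le_of_mem (mem_of_superset hIoo fun t ht => ⟨hx.1.trans ht.1.le, ht.2.le⟩)
  have hxI : x ∈ Icc a b := Ico_subset_Icc_self hx
  obtain ⟨i, hxi, hfreq⟩ := exists_eq_and_frequently_eq_of_eventually_exists_eq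
    ((hh x hxI).mono_left hle) (fun i => ((hG i).continuousOn x hxI).mono_left hle)
    (eventually_of_mem hIoo fun t ht => hsel t ⟨hx.1.trans ht.1.le, ht.2.le⟩)
  refine (hfreq.and_eventually hIoo).mono fun z ⟨hz, hzx, hzb⟩ => ?_
  have hzI : z ∈ Icc a b := ⟨hx.1.trans hzx.le, hzb.le⟩
  have hdist := (lipschitzOnWith_iff_dist_le_mul.1 (hG i)) z hzI x hxI
  rw [Real.dist_eq, Real.dist_eq, abs_of_pos (sub_pos.2 hzx)] at hdist
  calc slope h x z = (G i z - G i x) / (z - x) := by rw [slope_def_field, hz, hxi]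
    _ ≤ L := (div_le_iff₀ (sub_pos.2 hzx)).2 ((le_abs_self _).trans hdist)
    _ < r := hr

theorem LipschitzOnWith.of_forall_exists_eq {E ι : Type*} [NormedAddCommGroup E]
    [NormedSpace ℝ E] [Finite ι] {f : E → ℝ} {g : ι → E → ℝ} {K : ℝ≥0} {s : Set E}
    (hs : Convex ℝ s) (hf : ContinuousOn f s) (hg : ∀ i, LipschitzOnWith K (g i) s)
    (hsel : ∀ x ∈ s, ∃ i, f x = g i x) : LipschitzOnWith K f s := by
  refine LipschitzOnWith.of_le_add_mul K fun x hx y hy => ?_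
  set p : ℝ → E := ⇑(AffineMap.lineMap y x : ℝ →ᵃ[ℝ] E)
  have hp : MapsTo p (Icc 0 1) s := fun t ht => hs.lineMap_mem hy hx ht
  have hpLip : LipschitzWith (nndist y x) p := lipschitzWith_lineMap y x
  have := le_add_mul_sub_of_forall_exists_eq (h := f ∘ p) (G := fun i => g i ∘ p)
    (hf.comp hpLip.continuous.continuousOn hp) (fun i => (hg i).comp hpLip.lipschitzOnWith hp)
    (fun t ht => hsel _ (hp ht)) 1 ⟨zero_le_one, le_rfl⟩
  simpa [p, dist_comm] using this

theorem LocallyLipschitz.of_forall_exists_eq {E ι : Type*} [NormedAddCommGroup E]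
    [NormedSpace ℝ E] [Finite ι] {f : E → ℝ} {g : ι → E → ℝ} (hf : Continuous f)
    (hg : ∀ i, LocallyLipschitz (g i)) (hsel : ∀ x, ∃ i, f x = g i x) : LocallyLipschitz f := by
  intro x
  choose K t ht hK using fun i => hg i x
  obtain ⟨ε, hε, hball⟩ := Metric.mem_nhds_iff.1 (iInter_mem.2 ht)
  refine ⟨⨆ i, K i, ball x ε, ball_mem_nhds x hε,
    LipschitzOnWith.of_forall_exists_eq (convex_ball x ε) hf.continuousOn (fun i => ?_)
      fun y _ => hsel y⟩
  exact ((hK i).mono (hball.trans (iInter_subset t i))).weaken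
    (le_ciSup (Set.finite_range K).bddAbove i)

theorem LocallyLipschitz.ae_differentiableAt {E F : Type*} [NormedAddCommGroup E]
    [NormedSpace ℝ E] [FiniteDimensional ℝ E] [NormedAddCommGroup F] [NormedSpace ℝ F]
    [FiniteDimensional ℝ F] [MeasurableSpace E] [BorelSpace E] {μ : Measure E}
    [μ.IsAddHaarMeasure] {f : E → F} (hf : LocallyLipschitz f) :
    ∀ᵐ x ∂μ, DifferentiableAt ℝ f x := by
  have hball : ∀ n : ℕ, ∀ᵐ x ∂μ, x ∈ ball (0 : E) n → DifferentiableAt ℝ f x := fun n => by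
    obtain ⟨K, hK⟩ := LocallyLipschitzOn.exists_lipschitzOnWith_of_compact
      (isCompact_closedBall (0 : E) n) hf.locallyLipschitzOn
    filter_upwards [(hK.mono ball_subset_closedBall).ae_differentiableWithinAt_of_mem]
      with x hx hxn
    exact (hx hxn).differentiableAt (isOpen_ball.mem_nhds hxn)
  filter_upwards [ae_all_iff.2 hball] with x hx
  obtain ⟨n, hn⟩ := exists_nat_gt ‖x‖
  exact hx n (mem_ball_zero_iff.2 hn)

/-- Every piecewise smooth function `f : ℝ^d → ℝ` is differentiable at
Lebesgue-almost every point: the set of points of non-differentiability has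
`d`-dimensional Lebesgue measure zero. -/
theorem piecewiseSmooth_ae_differentiable (d : ℕ) (f : EuclideanSpace ℝ (Fin d) → ℝ)
    (hf : PiecewiseSmooth f) :
    volume {x : EuclideanSpace ℝ (Fin d) | ¬ DifferentiableAt ℝ f x} = 0 := by
  obtain ⟨hfc, ι, _, g, hg, hsel⟩ := hf
  have hlip : LocallyLipschitz f :=
    .of_forall_exists_eq hfc (fun i => (hg i).locallyLipschitz) hsel
  exact ae_iff.1 hlip.ae_differentiableAt
end
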